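/- (Lemma 1.3.) Let U ⊆ ℝᵐ be open, β and β₁ 2-form fields on U with β nondegenerate at every point, and let K : U → Matrix (Fin m) (Fin m) ℝ be a C^∞ matrix field with β₁(x)(u,v) = β(x)(K(x)u, v) for all x, u, v; set β₂(x)(u,v) = β(x)(K(x)²u, v), which is again a 2-form field. Then for all x ∈ U and u₁, u₂, u₃ ∈ ℝᵐ: β(x)(N_K(x)(u₁,u₂), u₃) + dβ(x)(K(x)u₁, K(x)u₂, u₃) = −dβ₂(x)(u₁,u₂,u₃) + dβ₁(x)(K(x)u₁, u₂, u₃) + dβ₁(x)(u₁, K(x)u₂, u₃). -/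

import Mathlib

open Matrix

/-- Directional derivative of a matrix field, entrywise. -/
noncomputable def matDirDeriv {d n : ℕ} (G : (Fin d → ℝ) → Matrix (Fin n) (Fin n) ℝ)
    (x w : Fin d → ℝ) : Matrix (Fin n) (Fin n) ℝ :=
  Matrix.of fun i j => fderiv ℝ (fun y => G y i j) x w

/-- The Nijenhuis torsion of a matrix field `G`. -/
noncomputable def nijenhuis {n : ℕ} (G : (Fin n → ℝ) → Matrix (Fin n) (Fin n) ℝ)
    (x u v : Fin n → ℝ) : Fin n → ℝ :=
  (matDirDeriv G x ((G x).mulVec u)).mulVec v - (matDirDeriv G x ((G x).mulVec v)).mulVec u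
    + (G x).mulVec ((matDirDeriv G x v).mulVec u) - (G x).mulVec ((matDirDeriv G x u).mulVec v)

/-- Exterior derivative of the 2-form field `(u,v) ↦ u ⬝ᵥ β(x)·v`:
`dβ(x)(u,v,w) = (Dβ(x)u)(v,w) − (Dβ(x)v)(u,w) + (Dβ(x)w)(u,v)`. -/
noncomputable def form2ExtDeriv {m : ℕ} (β : (Fin m → ℝ) → Matrix (Fin m) (Fin m) ℝ)
    (x u v w : Fin m → ℝ) : ℝ :=
  v ⬝ᵥ (matDirDeriv β x u).mulVec w - u ⬝ᵥ (matDirDeriv β x v).mulVec w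
    + u ⬝ᵥ (matDirDeriv β x w).mulVec v

/-!
Skew-symmetry of `β` and of `β₁ = Kᵀβ` forces `βK = Kᵀβ`. Writing `β₂ = Kᵀβ₁`, the Leibniz rule
expresses `Dβ₁` and `Dβ₂` through `DK` and `Dβ`; both sides of the identity then become the same
expression in `K`, `β`, `DK`, `Dβ` once every `βK` is replaced by `Kᵀβ`.
-/

open Filter Topology

lemma Matrix.mulVec_dotProduct {R m n : Type*} [CommSemiring R] [Fintype m] [Fintype n]
    (M : Matrix m n R) (u : n → R) (w : m → R) : (M *ᵥ u) ⬝ᵥ w = u ⬝ᵥ Mᵀ *ᵥ w := by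
  rw [← vecMul_transpose, ← dotProduct_mulVec]

lemma Matrix.eq_transpose_mul_of_dotProduct_mulVec {R n : Type*} [CommSemiring R] [Fintype n]
    [DecidableEq n] {A B K : Matrix n n R} (h : ∀ u v, u ⬝ᵥ A *ᵥ v = (K *ᵥ u) ⬝ᵥ B *ᵥ v) :
    A = Kᵀ * B := by
  refine (toLinearMap₂' R).injective (LinearMap.ext₂ fun (u v : n → R) => ?_)
  simp only [toLinearMap₂'_apply', h, mulVec_dotProduct, mulVec_mulVec]

lemma Filter.EventuallyEq.matDirDeriv_eq {d n : ℕ} {F G : (Fin d → ℝ) → Matrix (Fin n) (Fin n) ℝ}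
    {x : Fin d → ℝ} (h : F =ᶠ[𝓝 x] G) : matDirDeriv F x = matDirDeriv G x := by
  ext w i j
  have hij : (fun y => F y i j) =ᶠ[𝓝 x] fun y => G y i j := h.mono fun y hy => by simp only [hy]
  simp only [matDirDeriv, of_apply, hij.fderiv_eq]

lemma DifferentiableAt.matrix_mul_apply {d n : ℕ} {F G : (Fin d → ℝ) → Matrix (Fin n) (Fin n) ℝ}
    {x : Fin d → ℝ} (hF : ∀ i j, DifferentiableAt ℝ (fun y => F y i j) x)
    (hG : ∀ i j, DifferentiableAt ℝ (fun y => G y i j) x) (i j : Fin n) :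
    DifferentiableAt ℝ (fun y => (F y * G y) i j) x := by
  simp only [mul_apply]
  fun_prop

lemma matDirDeriv_mul {d n : ℕ} {F G : (Fin d → ℝ) → Matrix (Fin n) (Fin n) ℝ}
    {x : Fin d → ℝ} (hF : ∀ i j, DifferentiableAt ℝ (fun y => F y i j) x)
    (hG : ∀ i j, DifferentiableAt ℝ (fun y => G y i j) x) (w : Fin d → ℝ) :
    matDirDeriv (fun y => F y * G y) x w
      = matDirDeriv F x w * G x + F x * matDirDeriv G x w := by
  ext i j
  simp only [matDirDeriv, of_apply, Matrix.add_apply, mul_apply]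
  rw [fderiv_fun_sum fun k _ => (hF i k).fun_mul (hG k j)]
  simp only [_root_.sum_apply, fderiv_fun_mul (hF _ _) (hG _ _), _root_.add_apply,
    _root_.smul_apply, smul_eq_mul, Finset.sum_add_distrib]
  rw [add_comm]
  congr 1
  exact Finset.sum_congr rfl fun k _ => mul_comm _ _

lemma matDirDeriv_transpose {d n : ℕ} (F : (Fin d → ℝ) → Matrix (Fin n) (Fin n) ℝ)
    (x w : Fin d → ℝ) : matDirDeriv (fun y => (F y)ᵀ) x w = (matDirDeriv F x w)ᵀ :=
  rfl

lemma matDirDeriv_transpose_mul {d n : ℕ} {F G : (Fin d → ℝ) → Matrix (Fin n) (Fin n) ℝ}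
    {x : Fin d → ℝ} (hF : ∀ i j, DifferentiableAt ℝ (fun y => F y i j) x)
    (hG : ∀ i j, DifferentiableAt ℝ (fun y => G y i j) x) (w : Fin d → ℝ) :
    matDirDeriv (fun y => (F y)ᵀ * G y) x w
      = (matDirDeriv F x w)ᵀ * G x + (F x)ᵀ * matDirDeriv G x w := by
  rw [matDirDeriv_mul (F := fun y => (F y)ᵀ) (fun i j => hF j i) hG, matDirDeriv_transpose]

theorem lemma_1_3_general {m : ℕ} (U : Set (Fin m → ℝ)) (hU : IsOpen U)
    (β β₁ K : (Fin m → ℝ) → Matrix (Fin m) (Fin m) ℝ)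
    (hβs : ∀ i j, ContDiffOn ℝ (⊤ : ℕ∞) (fun x => β x i j) U)
    (hKs : ∀ i j, ContDiffOn ℝ (⊤ : ℕ∞) (fun x => K x i j) U)
    (hβalt : ∀ x ∈ U, (β x)ᵀ = -β x)
    (hβ₁alt : ∀ x ∈ U, (β₁ x)ᵀ = -β₁ x)
    (hrel : ∀ x ∈ U, ∀ u v : Fin m → ℝ,
      u ⬝ᵥ (β₁ x).mulVec v = ((K x).mulVec u) ⬝ᵥ (β x).mulVec v) :
    ∀ x ∈ U, ∀ u₁ u₂ u₃ : Fin m → ℝ,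
      (nijenhuis K x u₁ u₂) ⬝ᵥ (β x).mulVec u₃
          + form2ExtDeriv β x ((K x).mulVec u₁) ((K x).mulVec u₂) u₃
        = -form2ExtDeriv (fun y => (K y * K y)ᵀ * β y) x u₁ u₂ u₃
          + form2ExtDeriv β₁ x ((K x).mulVec u₁) u₂ u₃
          + form2ExtDeriv β₁ x u₁ ((K x).mulVec u₂) u₃ := by
  intro x hx u₁ u₂ u₃
  have hKd : ∀ i j, DifferentiableAt ℝ (fun y => K y i j) x := fun i j =>
    ((hKs i j).contDiffAt (hU.mem_nhds hx)).differentiableAt (by simp)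
  have hβd : ∀ i j, DifferentiableAt ℝ (fun y => β y i j) x := fun i j =>
    ((hβs i j).contDiffAt (hU.mem_nhds hx)).differentiableAt (by simp)
  have hβ₁ : β₁ =ᶠ[𝓝 x] fun y => (K y)ᵀ * β y :=
    eventually_of_mem (hU.mem_nhds hx) fun y hy => eq_transpose_mul_of_dotProduct_mulVec (hrel y hy)
  have hβ₂ : (fun y => (K y * K y)ᵀ * β y) = fun y => (K y)ᵀ * ((K y)ᵀ * β y) := by
    simp only [transpose_mul, Matrix.mul_assoc]
  have hcomm : β x * K x = (K x)ᵀ * β x := by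
    have h := hβ₁alt x hx
    rw [hβ₁.eq_of_nhds, transpose_mul, transpose_transpose, hβalt x hx, neg_mul] at h
    exact neg_injective h
  rw [hβ₂]
  simp only [nijenhuis, form2ExtDeriv, hβ₁.matDirDeriv_eq,
    matDirDeriv_transpose_mul (G := fun y => (K y)ᵀ * β y) hKd
      (DifferentiableAt.matrix_mul_apply (fun i j => hKd j i) hβd),
    matDirDeriv_transpose_mul hKd hβd]
  simp only [transpose_mul, add_mul, mul_add, add_mulVec, sub_dotProduct, add_dotProduct,
    dotProduct_add, mulVec_dotProduct, mulVec_mulVec, Matrix.mul_assoc]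
  rw [hcomm]
  ring

/-- Lemma 1.3: if `β` is a nondegenerate 2-form field, `β₁` a 2-form field and `K` a matrix
field with `β₁ = β(K·,·)`, and `β₂ = β(K²·,·)`, then
`β(N_K(u₁,u₂),u₃) + dβ(Ku₁,Ku₂,u₃) = −dβ₂(u₁,u₂,u₃) + dβ₁(Ku₁,u₂,u₃) + dβ₁(u₁,Ku₂,u₃)`. -/
theorem lemma_1_3 {m : ℕ} (U : Set (Fin m → ℝ)) (hU : IsOpen U)
    (β β₁ K : (Fin m → ℝ) → Matrix (Fin m) (Fin m) ℝ)
    (hβs : ∀ i j, ContDiffOn ℝ (⊤ : ℕ∞) (fun x => β x i j) U)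
    (hβ₁s : ∀ i j, ContDiffOn ℝ (⊤ : ℕ∞) (fun x => β₁ x i j) U)
    (hKs : ∀ i j, ContDiffOn ℝ (⊤ : ℕ∞) (fun x => K x i j) U)
    (hβalt : ∀ x ∈ U, (β x)ᵀ = -β x)
    (hβ₁alt : ∀ x ∈ U, (β₁ x)ᵀ = -β₁ x)
    (hβnd : ∀ x ∈ U, ∀ u : Fin m → ℝ, (∀ v, u ⬝ᵥ (β x).mulVec v = 0) → u = 0)
    (hrel : ∀ x ∈ U, ∀ u v : Fin m → ℝ,
      u ⬝ᵥ (β₁ x).mulVec v = ((K x).mulVec u) ⬝ᵥ (β x).mulVec v) :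
    ∀ x ∈ U, ∀ u₁ u₂ u₃ : Fin m → ℝ,
      (nijenhuis K x u₁ u₂) ⬝ᵥ (β x).mulVec u₃
          + form2ExtDeriv β x ((K x).mulVec u₁) ((K x).mulVec u₂) u₃
        = -form2ExtDeriv (fun y => (K y * K y)ᵀ * β y) x u₁ u₂ u₃
          + form2ExtDeriv β₁ x ((K x).mulVec u₁) u₂ u₃
          + form2ExtDeriv β₁ x u₁ ((K x).mulVec u₂) u₃ :=
  lemma_1_3_general U hU β β₁ K hβs hKs hβalt hβ₁alt hrel
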